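/- Suppose in addition that u is locally Lipschitz, that ρ(0) = 1, and that ρ has a one-sided derivative at 0 from the right, ρ'₊(0), with ρ'₊(0) ≠ 0. If k is stationary, i.e. k(x + t, x' + t) = k(x, x') for all x, x', t ∈ ℝ^d, then u is constant on ℝ^d. (The forward direction of Proposition 2, stated at the level of the Paciorek covariance function: a stationary layer-conditional covariance forces the length-scale process to be constant.) -/

import Mathlib

/-!
Along a ray `s ↦ x + s • e`, the Paciorek prefactor
`2^(d/2) (u x u x')^(d/4) / (u x + u x')^(d/2)` is a power of the ratio of the geometric to the arithmetic mean of `u x` and `u x'`; it is maximal,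
hence flat, at `u x' = u x`. Composed with the merely Lipschitz `u`, it therefore contributes
nothing to the right derivative at `s = 0`, and `s ↦ k x (x + s • e)` has right derivative
`σ² ρ'₊(0) ‖e‖ / √(u x)` there. Stationarity makes this derivative independent of `x`.
-/

open Filter Asymptotics Set Topology

theorem LocallyLipschitz.isBigO_sub {E F : Type*} [SeminormedAddCommGroup E]
    [SeminormedAddCommGroup F] {f : E → F} (hf : LocallyLipschitz f) (x : E) :
    (fun y => f y - f x) =O[𝓝 x] fun y => y - x := by
  obtain ⟨K, t, ht, hK⟩ := hf x
  refine isBigO_iff.2 ⟨K, ?_⟩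
  filter_upwards [ht] with y hy
  simpa only [dist_eq_norm] using hK.dist_le_mul y hy x (mem_of_mem_nhds ht)

theorem HasDerivAt.comp_of_isBigO_sub {𝕜 F : Type*} [NontriviallyNormedField 𝕜]
    [NormedAddCommGroup F] [NormedSpace 𝕜 F] {g : 𝕜 → F} {f : 𝕜 → 𝕜} {x : 𝕜}
    (hg : HasDerivAt g 0 (f x)) (hf : (fun y => f y - f x) =O[𝓝 x] fun y => y - x) :
    HasDerivAt (g ∘ f) 0 x := by
  rw [hasDerivAt_iff_isLittleO] at hg ⊢
  simp only [smul_zero, sub_zero] at hg ⊢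
  have hfx : Tendsto f (𝓝 x) (𝓝 (f x)) := by
    have := hf.trans_tendsto (tendsto_sub_nhds_zero_iff.2 tendsto_id)
    exact tendsto_sub_nhds_zero_iff.1 this
  exact (hg.comp_tendsto hfx).trans_isBigO hf

theorem hasDerivAt_sub_mul_of_continuousAt {𝕜 : Type*} [NontriviallyNormedField 𝕜]
    {h : 𝕜 → 𝕜} {a : 𝕜} (hh : ContinuousAt h a) :
    HasDerivAt (fun s => (s - a) * h s) (h a) a := by
  rw [hasDerivAt_iff_isLittleO]
  have hsmall : (fun s => h s - h a) =o[𝓝 a] fun _ => (1 : 𝕜) :=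
    (isLittleO_one_iff 𝕜).2 (tendsto_sub_nhds_zero_iff.2 hh)
  have := (isBigO_refl (fun s => s - a) (𝓝 a)).mul_isLittleO hsmall
  simp only [mul_one] at this
  refine this.congr_left fun s => ?_
  simp only [sub_self, zero_mul, sub_zero, smul_eq_mul]
  ring

noncomputable def paciorekPrefactor (d a b : ℝ) : ℝ :=
  (2:ℝ) ^ (d/2) * (a * b) ^ (d/4) / (a + b) ^ (d/2)

theorem paciorekPrefactor_self (d : ℝ) {a : ℝ} (ha : 0 < a) : paciorekPrefactor d a a = 1 := by
  have hnum : (a * a) ^ (d/4) = a ^ (d/2) := by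
    rw [Real.mul_rpow ha.le ha.le, ← Real.rpow_add ha]; ring_nf
  have hden : (a + a) ^ (d/2) = (2:ℝ) ^ (d/2) * a ^ (d/2) := by
    rw [← two_mul, Real.mul_rpow zero_le_two ha.le]
  rw [paciorekPrefactor, hnum, hden, div_self (by positivity)]

theorem hasDerivAt_paciorekPrefactor_self (d : ℝ) {a : ℝ} (ha : 0 < a) :
    HasDerivAt (paciorekPrefactor d a) 0 a := by
  have hnum : HasDerivAt (fun b => (a * b) ^ (d/4)) (a * (d/4) * (a * a) ^ (d/4 - 1)) a :=
    ((hasDerivAt_id a).const_mul a).rpow_const (Or.inl (by simp; positivity))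
      |>.congr_deriv (by simp)
  have hden : HasDerivAt (fun b => (a + b) ^ (d/2)) (d/2 * (a + a) ^ (d/2 - 1)) a :=
    ((hasDerivAt_id a).const_add a).rpow_const (Or.inl (by simp; positivity))
      |>.congr_deriv (by simp)
  refine ((hnum.const_mul _).div hden (by positivity)).congr_deriv ?_
  have e1 : (a * a) ^ (d/4) = (a * a) ^ (d/4 - 1) * (a * a) := by
    rw [← Real.rpow_add_one (by positivity) (d/4 - 1)]; norm_num
  have e2 : (a + a) ^ (d/2) = (a + a) ^ (d/2 - 1) * (a + a) := by
    rw [← Real.rpow_add_one (by positivity) (d/2 - 1)]; norm_num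
  rw [e1, e2]
  ring

noncomputable def paciorekKernel {E : Type*} [NormedAddCommGroup E] (d σ2 : ℝ) (ρ : ℝ → ℝ)
    (u : E → ℝ) (x x' : E) : ℝ :=
  σ2 * paciorekPrefactor d (u x) (u x') * ρ (‖x - x'‖ / Real.sqrt ((u x + u x') / 2))

theorem hasDerivWithinAt_paciorekKernel_line {E : Type*} [NormedAddCommGroup E]
    [NormedSpace ℝ E] (d σ2 : ℝ) {ρ : ℝ → ℝ} {u : E → ℝ} (hLip : LocallyLipschitz u) {x : E}
    (hux : 0 < u x) {ρ'0 : ℝ} (hρ' : HasDerivWithinAt ρ ρ'0 (Ici 0) 0) (e : E) :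
    HasDerivWithinAt (fun s : ℝ => paciorekKernel d σ2 ρ u x (x + s • e))
      (σ2 * ρ'0 * ‖e‖ / Real.sqrt (u x)) (Ici 0) 0 := by
  set b : ℝ → ℝ := fun s => u (x + s • e)
  set h : ℝ → ℝ := fun s => ‖e‖ / Real.sqrt ((u x + b s) / 2)
  have hb0 : b 0 = u x := by simp [b]
  have hbO : (fun s => b s - b 0) =O[𝓝 0] fun s => s - 0 :=
    (hLip.comp (by fun_prop : ContDiff ℝ 1 fun s : ℝ => x + s • e).locallyLipschitz).isBigO_sub 0
  have hprefactor : HasDerivAt (paciorekPrefactor d (u x) ∘ b) 0 0 := by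
    refine HasDerivAt.comp_of_isBigO_sub ?_ hbO
    rw [hb0]
    exact hasDerivAt_paciorekPrefactor_self d hux
  have hh : ContinuousAt h 0 := by
    have : ContinuousAt b 0 := (hLip.continuous.comp (by fun_prop)).continuousAt
    refine continuousAt_const.div (Real.continuous_sqrt.continuousAt.comp ?_) ?_
    · exact (continuousAt_const.add this).div_const 2
    · simp [hb0, (Real.sqrt_pos.2 hux).ne']
  have hcorr : HasDerivWithinAt (fun s => ρ ((s - 0) * h s)) (ρ'0 * h 0) (Ici 0) 0 :=
    hρ'.comp_of_eq 0 (hasDerivAt_sub_mul_of_continuousAt hh).hasDerivWithinAt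
      (fun s (hs : 0 ≤ s) => mem_Ici.2 <|
        mul_nonneg (by simpa using hs) (div_nonneg (norm_nonneg e) (Real.sqrt_nonneg _))) (by simp)
  refine (((hprefactor.hasDerivWithinAt.mul hcorr).const_mul σ2).congr_of_mem
    (fun s hs => ?_) self_mem_Ici).congr_deriv ?_
  · have hdist : ‖x - (x + s • e)‖ = s * ‖e‖ := by
      rw [sub_add_cancel_left, norm_neg, norm_smul, Real.norm_of_nonneg hs]
    simp only [paciorekKernel, Pi.mul_apply, Function.comp_apply, h, b, hdist, sub_zero,
      mul_div_assoc, mul_assoc]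
  · simp only [h, hb0, zero_mul, zero_add, sub_zero, Function.comp, add_self_div_two,
      paciorekPrefactor_self d hux]
    ring

theorem paciorek_kernel_stationary_implies_constant_lengthscale_general
    (d : ℕ) (σ2 : ℝ) (hσ2 : 0 < σ2) (ρ : ℝ → ℝ)
    (u : EuclideanSpace ℝ (Fin d) → ℝ) (hu : ∀ x, 0 < u x)
    (k : EuclideanSpace ℝ (Fin d) → EuclideanSpace ℝ (Fin d) → ℝ)
    (hk : ∀ x x' : EuclideanSpace ℝ (Fin d),
      k x x' = σ2 * ((2:ℝ) ^ ((d:ℝ)/2) * (u x * u x') ^ ((d:ℝ)/4) /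
          (u x + u x') ^ ((d:ℝ)/2)) *
        ρ (‖x - x'‖ / Real.sqrt ((u x + u x') / 2)))
    (hLip : LocallyLipschitz u)
    (ρ'0 : ℝ) (hρ' : HasDerivWithinAt ρ ρ'0 (Set.Ici (0:ℝ)) 0) (hρ'ne : ρ'0 ≠ 0)
    (hstat : ∀ x x' t : EuclideanSpace ℝ (Fin d), k (x + t) (x' + t) = k x x') :
    ∀ x y : EuclideanSpace ℝ (Fin d), u x = u y := by
  intro x y
  rcases eq_or_ne x y with rfl | hxy
  · rfl
  obtain rfl : k = paciorekKernel (d:ℝ) σ2 ρ u := funext fun x => funext (hk x)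
  set e := y - x
  have hline : (fun s : ℝ => paciorekKernel d σ2 ρ u y (y + s • e)) =
      fun s => paciorekKernel d σ2 ρ u x (x + s • e) := funext fun s => by
    rw [← hstat x (x + s • e) e, add_sub_cancel, add_right_comm, add_sub_cancel]
  have hderiv := (uniqueDiffWithinAt_Ici 0).eq_deriv _
    (hasDerivWithinAt_paciorekKernel_line d σ2 hLip (hu x) hρ' e)
    (hline ▸ hasDerivWithinAt_paciorekKernel_line d σ2 hLip (hu y) hρ' e)
  have hc : σ2 * ρ'0 * ‖e‖ ≠ 0 := by
    have : e ≠ 0 := sub_ne_zero.2 hxy.symm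
    positivity
  rwa [div_eq_mul_inv, div_eq_mul_inv, mul_right_inj' hc, inv_inj,
    Real.sqrt_inj (hu x).le (hu y).le] at hderiv

/-- Forward direction of Proposition 2 at the level of the Paciorek covariance
function: if `u` is locally Lipschitz, `ρ 0 = 1`, `ρ` has a nonzero one-sided
derivative from the right at `0`, and the Paciorek kernel `k` is stationary,
then the length-scale function `u` is constant. -/
theorem paciorek_kernel_stationary_implies_constant_lengthscale
    (d : ℕ) (hd : 1 ≤ d) (σ2 : ℝ) (hσ2 : 0 < σ2) (ρ : ℝ → ℝ)
    (u : EuclideanSpace ℝ (Fin d) → ℝ) (hu : ∀ x, 0 < u x)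
    (k : EuclideanSpace ℝ (Fin d) → EuclideanSpace ℝ (Fin d) → ℝ)
    (hk : ∀ x x' : EuclideanSpace ℝ (Fin d),
      k x x' = σ2 * ((2:ℝ) ^ ((d:ℝ)/2) * (u x * u x') ^ ((d:ℝ)/4) /
          (u x + u x') ^ ((d:ℝ)/2)) *
        ρ (‖x - x'‖ / Real.sqrt ((u x + u x') / 2)))
    (hLip : LocallyLipschitz u) (hρ0 : ρ 0 = 1)
    (ρ'0 : ℝ) (hρ' : HasDerivWithinAt ρ ρ'0 (Set.Ici (0:ℝ)) 0) (hρ'ne : ρ'0 ≠ 0)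
    (hstat : ∀ x x' t : EuclideanSpace ℝ (Fin d), k (x + t) (x' + t) = k x x') :
    ∀ x y : EuclideanSpace ℝ (Fin d), u x = u y :=
  paciorek_kernel_stationary_implies_constant_lengthscale_general d σ2 hσ2 ρ u hu k hk hLip ρ'0 hρ'
    hρ'ne hstat
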